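/- Let A be a Gorenstein artin algebra, M a finitely generated Gorenstein-projective left A-module, and (X_i)_{i ∈ I} an arbitrary family of Gorenstein-projective A-modules. Then the natural map ⊕_{i∈I} StHom_A(M, X_i) → StHom_A(M, ⊕_{i∈I} X_i) is an isomorphism, where StHom_A(M, N) denotes the quotient of Hom_A(M, N) by the subgroup of homomorphisms factoring through a projective module. (That is, finitely generated Gorenstein-projective modules are compact objects in the stable category of all Gorenstein-projective modules.) -/

import Mathlib

open CategoryTheory DirectSum

universe u

/-- A left module `M` over `A` is **Gorenstein-projective** if it is the 0-th cocycle
of a totally acyclic complex of projective `A`-modules: an acyclic complex of projectives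
such that both Hom-complexes `Hom_A(Q, P^•)` and `Hom_A(P^•, Q)` are exact for every
projective module `Q`. -/
def IsGorensteinProjective (A : Type u) [Ring A] (M : Type u) [AddCommGroup M]
    [Module A M] : Prop :=
  ∃ (P : ℤ → ModuleCat.{u} A) (d : ∀ n : ℤ, P n ⟶ P (n + 1)),
    (∀ n : ℤ, Module.Projective A (P n)) ∧
    (∀ n : ℤ, LinearMap.range (d n).hom = LinearMap.ker (d (n + 1)).hom) ∧
    (∀ (Q : ModuleCat.{u} A), Module.Projective A Q →
      (∀ (n : ℤ) (f : Q ⟶ P (n + 1)), f ≫ d (n + 1) = 0 → ∃ g : Q ⟶ P n, g ≫ d n = f) ∧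
      (∀ (n : ℤ) (f : P (n + 1) ⟶ Q), d n ≫ f = 0 →
        ∃ g : P (n + 1 + 1) ⟶ Q, d (n + 1) ≫ g = f)) ∧
    Nonempty (M ≃ₗ[A] LinearMap.ker (d 0).hom)

/-- A finitely generated module `M` is **(finitely generated) Gorenstein-projective**
if it is the 0-th cocycle of a totally acyclic complex of finitely generated projective
`A`-modules, where total acyclicity is tested against finitely generated projectives. -/
def IsFgGorensteinProjective (A : Type u) [Ring A] (M : Type u) [AddCommGroup M]
    [Module A M] : Prop :=
  ∃ (P : ℤ → ModuleCat.{u} A) (d : ∀ n : ℤ, P n ⟶ P (n + 1)),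
    (∀ n : ℤ, Module.Finite A (P n)) ∧
    (∀ n : ℤ, Module.Projective A (P n)) ∧
    (∀ n : ℤ, LinearMap.range (d n).hom = LinearMap.ker (d (n + 1)).hom) ∧
    (∀ (Q : ModuleCat.{u} A), Module.Finite A Q → Module.Projective A Q →
      (∀ (n : ℤ) (f : Q ⟶ P (n + 1)), f ≫ d (n + 1) = 0 → ∃ g : Q ⟶ P n, g ≫ d n = f) ∧
      (∀ (n : ℤ) (f : P (n + 1) ⟶ Q), d n ≫ f = 0 →
        ∃ g : P (n + 1 + 1) ⟶ Q, d (n + 1) ≫ g = f)) ∧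
    Nonempty (M ≃ₗ[A] LinearMap.ker (d 0).hom)

/-- `M` has finite injective dimension over `A`: there is a finite injective
coresolution `0 → M → I^0 → I^1 → ⋯ → I^n → 0`. -/
def HasFiniteInjectiveDimension (A : Type u) [Ring A] (M : Type u) [AddCommGroup M]
    [Module A M] : Prop :=
  ∃ (n : ℕ) (I : ℕ → ModuleCat.{u} A) (d : ∀ i : ℕ, I i ⟶ I (i + 1)) (ι : M →ₗ[A] I 0),
    (∀ i, Module.Injective A (I i)) ∧
    Function.Injective ι ∧
    LinearMap.range ι = LinearMap.ker (d 0).hom ∧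
    (∀ i : ℕ, LinearMap.range (d i).hom = LinearMap.ker (d (i + 1)).hom) ∧
    (∀ i : ℕ, n < i → Subsingleton (I i))

/-- An artin algebra `A` is **Gorenstein** if the regular module `A` has finite injective
dimension both as a left and as a right `A`-module (right modules being left `Aᵐᵒᵖ`-modules). -/
def IsGorensteinAlgebra (A : Type u) [Ring A] : Prop :=
  HasFiniteInjectiveDimension A A ∧ HasFiniteInjectiveDimension Aᵐᵒᵖ Aᵐᵒᵖ

/-- A module is indecomposable if it is nonzero and admits no nontrivial direct sum
decomposition. -/
def IsIndecomposableModule (A : Type u) [Ring A] (M : Type u) [AddCommGroup M]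
    [Module A M] : Prop :=
  ¬ Subsingleton M ∧ ∀ (N₁ N₂ : Submodule A M), IsCompl N₁ N₂ → N₁ = ⊥ ∨ N₂ = ⊥

/-- An artin algebra is **CM-finite** if there are only finitely many isomorphism classes
of indecomposable finitely generated Gorenstein-projective modules. -/
def IsCMFinite (A : Type u) [Ring A] : Prop :=
  ∃ (m : ℕ) (G : Fin m → ModuleCat.{u} A),
    ∀ (M : ModuleCat.{u} A), IsFgGorensteinProjective A M → IsIndecomposableModule A M →
      ∃ i : Fin m, Nonempty (M ≃ₗ[A] G i)

/-- `X` is a direct sum of finitely generated Gorenstein-projective modules. -/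
def IsDirectSumOfFgGorensteinProjectives (A : Type u) [Ring A] (X : Type u)
    [AddCommGroup X] [Module A X] : Prop :=
  ∃ (ι : Type u) (M : ι → ModuleCat.{u} A),
    (∀ i, IsFgGorensteinProjective A (M i)) ∧ Nonempty (X ≃ₗ[A] ⨁ i : ι, (M i : Type u))


/-- A homomorphism of `A`-modules factors through a projective module. -/
def FactorsThroughProjective (A : Type u) [Ring A] {M N : Type u}
    [AddCommGroup M] [Module A M] [AddCommGroup N] [Module A N] (f : M →ₗ[A] N) : Prop :=
  ∃ (P : ModuleCat.{u} A) (u : M →ₗ[A] P) (v : (P : Type u) →ₗ[A] N),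
    Module.Projective A P ∧ v ∘ₗ u = f

section FTP

variable {A : Type u} [Ring A] {M N : Type u}
  [AddCommGroup M] [Module A M] [AddCommGroup N] [Module A N]

lemma ftp_zero : FactorsThroughProjective A (0 : M →ₗ[A] N) :=
  ⟨ModuleCat.of A A, 0, 0, inferInstanceAs (Module.Projective A A), by ext; simp⟩

lemma ftp_add {f g : M →ₗ[A] N} (hf : FactorsThroughProjective A f)
    (hg : FactorsThroughProjective A g) : FactorsThroughProjective A (f + g) := by
  obtain ⟨P, u, v, hP, huv⟩ := hf
  obtain ⟨Q, u', v', hQ, huv'⟩ := hg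
  refine ⟨ModuleCat.of A (↥P × ↥Q), LinearMap.prod u u',
    LinearMap.coprod v v', ?_, ?_⟩
  · haveI := hP; haveI := hQ
    exact inferInstanceAs (Module.Projective A (↥P × ↥Q))
  · ext x
    show v (u x) + v' (u' x) = f x + g x
    rw [← huv, ← huv']
    rfl

lemma ftp_neg {f : M →ₗ[A] N} (hf : FactorsThroughProjective A f) :
    FactorsThroughProjective A (-f) := by
  obtain ⟨P, u, v, hP, huv⟩ := hf
  exact ⟨P, u, -v, hP, by rw [LinearMap.neg_comp, huv]⟩

lemma ftp_comp_left {N' : Type u} [AddCommGroup N'] [Module A N'] (g : N →ₗ[A] N')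
    {f : M →ₗ[A] N} (hf : FactorsThroughProjective A f) :
    FactorsThroughProjective A (g ∘ₗ f) := by
  obtain ⟨P, u, v, hP, huv⟩ := hf
  exact ⟨P, u, g ∘ₗ v, hP, by rw [LinearMap.comp_assoc, huv]⟩

lemma ftp_comp_right {M' : Type u} [AddCommGroup M'] [Module A M'] (g : M' →ₗ[A] M)
    {f : M →ₗ[A] N} (hf : FactorsThroughProjective A f) :
    FactorsThroughProjective A (f ∘ₗ g) := by
  obtain ⟨P, u, v, hP, huv⟩ := hf
  exact ⟨P, u ∘ₗ g, v, hP, by rw [← LinearMap.comp_assoc, huv]⟩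

/-- The maps `M → N` factoring through a projective module form a subgroup of
`Hom_A(M, N)`. -/
def stablyTrivialHoms (A : Type u) [Ring A] (M N : Type u)
    [AddCommGroup M] [Module A M] [AddCommGroup N] [Module A N] :
    AddSubgroup (M →ₗ[A] N) where
  carrier := {f | FactorsThroughProjective A f}
  zero_mem' := ftp_zero
  add_mem' := ftp_add
  neg_mem' := ftp_neg

/-- The stable Hom-group `StHom A M N`: homomorphisms modulo those factoring through a
projective module. -/
def StHom (A : Type u) [Ring A] (M N : Type u)
    [AddCommGroup M] [Module A M] [AddCommGroup N] [Module A N] : Type u :=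
  (M →ₗ[A] N) ⧸ stablyTrivialHoms A M N

instance (A : Type u) [Ring A] (M N : Type u)
    [AddCommGroup M] [Module A M] [AddCommGroup N] [Module A N] :
    AddCommGroup (StHom A M N) :=
  QuotientAddGroup.Quotient.addCommGroup _

end FTP

section Compactness

variable (A : Type u) [Ring A]
variable (M : Type u) [AddCommGroup M] [Module A M]
variable {ι : Type u} [DecidableEq ι] (X : ι → Type u)
  [∀ i, AddCommGroup (X i)] [∀ i, Module A (X i)]

/-- Postcomposition with the canonical inclusion `X i → ⨁ i, X i`, as a map of
stable Hom-groups `StHom A M (X i) → StHom A M (⨁ i, X i)`. -/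
noncomputable def stHomToDirectSum (i : ι) :
    StHom A M (X i) →+ StHom A M (⨁ i, X i) :=
  QuotientAddGroup.map (stablyTrivialHoms A M (X i)) (stablyTrivialHoms A M (⨁ i, X i))
    { toFun := fun f => (DirectSum.lof A ι X i) ∘ₗ f
      map_zero' := by ext x; simp
      map_add' := by intro f g; ext x; simp }
    (fun f hf => ftp_comp_left (DirectSum.lof A ι X i) hf)

/-- The canonical map `⨁ i, StHom A M (X i) → StHom A M (⨁ i, X i)`. -/
noncomputable def stHomDirectSumComparison :
    (⨁ i : ι, StHom A M (X i)) →+ StHom A M (⨁ i, X i) :=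
  DirectSum.toAddMonoid (fun i => stHomToDirectSum A M X i)

end Compactness

/-
Compactness here is elementary. Composing with the projections `⨁ j, X j → X i` gives, on
stable Homs, one-sided inverses of the canonical map coordinate by coordinate, so it is
injective for every `M`. If `M` is finitely generated, every `F : M → ⨁ i, X i` lands in
finitely many summands and hence is the finite sum of the `lof i ∘ component i ∘ F`, which is
the image of a finitely supported family of stable classes: surjectivity.
-/

theorem IsFgGorensteinProjective.finite {A : Type u} [Ring A] {M : Type u} [AddCommGroup M]
    [Module A M] (hM : IsFgGorensteinProjective A M) : Module.Finite A M := by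
  obtain ⟨P, d, hfin, -, hexact, -, ⟨e⟩⟩ := hM
  have := hfin (-1)
  have := Module.Finite.range (d (-1)).hom
  -- `M ≅ Z⁰ = B⁰`, the image of the finitely generated module `P⁻¹`.
  have hB : LinearMap.range (d (-1)).hom = LinearMap.ker (d 0).hom := hexact (-1)
  exact Module.Finite.equiv (e.trans (LinearEquiv.ofEq _ _ hB.symm)).symm

namespace StHom

variable {A : Type u} [Ring A] {M N N' : Type u} [AddCommGroup M] [Module A M]
  [AddCommGroup N] [Module A N] [AddCommGroup N'] [Module A N']

abbrev mk (f : M →ₗ[A] N) : StHom A M N :=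
  QuotientAddGroup.mk (s := stablyTrivialHoms A M N) f

theorem mk_surjective : Function.Surjective (mk : (M →ₗ[A] N) → StHom A M N) :=
  QuotientAddGroup.mk_surjective

noncomputable def map (g : N →ₗ[A] N') : StHom A M N →+ StHom A M N' :=
  QuotientAddGroup.map (stablyTrivialHoms A M N) (stablyTrivialHoms A M N')
    { toFun := fun f => g ∘ₗ f
      map_zero' := LinearMap.comp_zero g
      map_add' := fun f₁ f₂ => LinearMap.comp_add f₁ f₂ g }
    (fun _ hf => ftp_comp_left g hf)

@[simp]
theorem map_mk (g : N →ₗ[A] N') (f : M →ₗ[A] N) : map g (mk f) = mk (g ∘ₗ f) :=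
  rfl

end StHom

section Compactness

variable {A : Type u} [Ring A] {M : Type u} [AddCommGroup M] [Module A M]
  {ι : Type u} [DecidableEq ι] {X : ι → Type u} [∀ i, AddCommGroup (X i)] [∀ i, Module A (X i)]

theorem stHomDirectSumComparison_of_mk (i : ι) (f : M →ₗ[A] X i) :
    stHomDirectSumComparison A M X (DirectSum.of _ i (StHom.mk f)) =
      StHom.mk (DirectSum.lof A ι X i ∘ₗ f) :=
  DirectSum.toAddMonoid_of _ _ _

theorem StHom.map_component_stHomDirectSumComparison (i : ι) (x : ⨁ j, StHom A M (X j)) :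
    StHom.map (DirectSum.component A ι X i) (stHomDirectSumComparison A M X x) = x i := by
  induction x using DirectSum.induction_on with
  | zero => simp
  | of j y =>
    obtain ⟨f, rfl⟩ := StHom.mk_surjective y
    rw [stHomDirectSumComparison_of_mk, StHom.map_mk, ← LinearMap.comp_assoc]
    by_cases hji : j = i
    · subst hji
      rw [DirectSum.component_comp_lof_same, LinearMap.id_comp, DirectSum.of_eq_same]
    · rw [DirectSum.component_comp_lof, dif_neg hji, LinearMap.zero_comp]
      exact (DirectSum.of_eq_of_ne (β := fun j => StHom A M (X j)) j i _ (Ne.symm hji)).symm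
  | add x y hx hy => rw [map_add, map_add, DirectSum.add_apply, hx, hy]

theorem stHomDirectSumComparison_injective :
    Function.Injective (stHomDirectSumComparison A M X) := by
  refine (injective_iff_map_eq_zero _).2 fun x hx => DFinsupp.ext fun i => ?_
  rw [← StHom.map_component_stHomDirectSumComparison i x, hx, map_zero, DirectSum.zero_apply]

theorem LinearMap.exists_finset_eq_sum_lof_comp_component [Module.Finite A M]
    (F : M →ₗ[A] ⨁ i, X i) :
    ∃ S : Finset ι,
      ∑ i ∈ S, DirectSum.lof A ι X i ∘ₗ DirectSum.component A ι X i ∘ₗ F = F := by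
  classical
  obtain ⟨T, hT⟩ := Module.Finite.fg_top (R := A) (M := M)
  refine ⟨T.sup fun m => (F m).support, LinearMap.ext_on hT fun m hm => ?_⟩
  have hsupp : (F m).support ⊆ T.sup fun m => (F m).support :=
    Finset.le_sup (f := fun m => (F m).support) hm
  simp only [LinearMap.sum_apply, LinearMap.comp_apply, DirectSum.lof_eq_of,
    ← DirectSum.apply_eq_component]
  rw [← Finset.sum_subset hsupp fun i _ hi => by rw [DFinsupp.notMem_support_iff.1 hi, map_zero]]
  exact DirectSum.sum_support_of (F m)

theorem stHomDirectSumComparison_surjective [Module.Finite A M] :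
    Function.Surjective (stHomDirectSumComparison A M X) := by
  intro y
  obtain ⟨F, rfl⟩ := StHom.mk_surjective y
  obtain ⟨S, hS⟩ := LinearMap.exists_finset_eq_sum_lof_comp_component F
  refine ⟨∑ i ∈ S, DirectSum.of _ i (StHom.mk (DirectSum.component A ι X i ∘ₗ F)), ?_⟩
  simp only [map_sum, stHomDirectSumComparison_of_mk]
  exact (map_sum (QuotientAddGroup.mk' (stablyTrivialHoms A M (⨁ i, X i))) _ S).symm.trans
    (congrArg _ hS)

end Compactness

theorem fgGorensteinProjective_compact_in_stable_category_general
    (A : Type u) [Ring A]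
    (M : Type u) [AddCommGroup M] [Module A M]
    (hM : IsFgGorensteinProjective A M)
    (ι : Type u) [DecidableEq ι] (X : ι → Type u)
    [∀ i, AddCommGroup (X i)] [∀ i, Module A (X i)] :
    Function.Bijective (stHomDirectSumComparison A M X) :=
  have := hM.finite
  ⟨stHomDirectSumComparison_injective, stHomDirectSumComparison_surjective⟩

/-- Finitely generated Gorenstein-projective modules are compact in the stable category
of Gorenstein-projective modules: for a finitely generated Gorenstein-projective `M` and
any family `(X i)` of Gorenstein-projective modules, the canonical map
`⨁ i, StHom A M (X i) → StHom A M (⨁ i, X i)` is bijective. -/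
theorem fgGorensteinProjective_compact_in_stable_category
    (R : Type u) [CommRing R] [IsArtinianRing R]
    (A : Type u) [Ring A] [Algebra R A] [Module.Finite R A]
    (hGor : IsGorensteinAlgebra A)
    (M : Type u) [AddCommGroup M] [Module A M]
    (hM : IsFgGorensteinProjective A M)
    (ι : Type u) [DecidableEq ι] (X : ι → Type u)
    [∀ i, AddCommGroup (X i)] [∀ i, Module A (X i)]
    (hX : ∀ i, IsGorensteinProjective A (X i)) :
    Function.Bijective (stHomDirectSumComparison A M X) :=
  fgGorensteinProjective_compact_in_stable_category_general A M hM ι X
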